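/- Let T ∈ (0, +∞) and let F : [0, T) → (0, +∞) be continuous with lim_{t→T} F(t) = +∞. Then there exists a sequence (t_k) with t_k → T such that (∫₀^{t_k} F(τ) dτ) / F(t_k) → 0 as k → ∞. -/

import Mathlib

/-!
If the conclusion failed, then for some `ε > 0` the primitive `G t = ∫₀ᵗ F` would satisfy
`ε G' = ε F ≤ G` on a left neighbourhood `[s, T)` of `T`. By Grönwall's inequality `G` then grows at
most like `exp (t / ε)`, hence stays bounded on `[s, T)`, and so does `F ≤ G / ε`, contradicting
`F → ∞`. Thus `0` is a cluster value of `(∫₀ᵗ F) / F t` as `t → T⁻`, and a sequence realises it.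
-/

open Filter Set Topology

theorem le_mul_exp_of_mul_deriv_le {G g : ℝ → ℝ} {s t ε : ℝ} (hε : 0 < ε) (hst : s ≤ t)
    (hG : ContinuousOn G (Icc s t)) (hderiv : ∀ x ∈ Ico s t, HasDerivWithinAt G (g x) (Ici x) x)
    (hle : ∀ x ∈ Ico s t, ε * g x ≤ G x) :
    G t ≤ G s * Real.exp ((t - s) / ε) := by
  have bound : ∀ x ∈ Ico s t, g x ≤ ε⁻¹ * G x + 0 := fun x hx => by
    rw [add_zero, ← div_eq_inv_mul, le_div_iff₀ hε, mul_comm]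
    exact hle x hx
  have := le_gronwallBound_of_liminf_deriv_right_le hG
    (fun x hx _ hr => (hderiv x hx).liminf_right_slope_le hr) le_rfl bound t ⟨hst, le_rfl⟩
  rwa [gronwallBound_ε0, inv_mul_eq_div] at this

section

variable {F : ℝ → ℝ} {a T : ℝ}

theorem hasDerivAt_integral_of_continuousOn_Ico (hcont : ContinuousOn F (Ico a T)) {x : ℝ}
    (hx : x ∈ Ioo a T) : HasDerivAt (fun t => ∫ τ in a..t, F τ) (F x) x := by
  have hcont' : ContinuousOn F (Ioo a T) := hcont.mono Ioo_subset_Ico_self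
  refine intervalIntegral.integral_hasDerivAt_right ?_
    (hcont'.stronglyMeasurableAtFilter isOpen_Ioo x hx) (hcont'.continuousAt (isOpen_Ioo.mem_nhds hx))
  refine (hcont.mono ?_).intervalIntegrable
  rw [uIcc_of_le hx.1.le]
  exact Icc_subset_Ico_right hx.2

theorem frequently_integral_lt_mul_of_tendsto_atTop (haT : a < T)
    (hcont : ContinuousOn F (Ico a T)) (hlim : Tendsto F (𝓝[<] T) atTop) {ε : ℝ} (hε : 0 < ε) :
    ∃ᶠ t in 𝓝[<] T, (∫ τ in a..t, F τ) < ε * F t := by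
  set G : ℝ → ℝ := fun t => ∫ τ in a..t, F τ
  by_contra h
  rw [not_frequently] at h
  obtain ⟨l, hlT, hl⟩ := (mem_nhdsLT_iff_exists_Ioo_subset' haT).1
    (inter_mem (Ioo_mem_nhdsLT haT) (h.mono fun t ht => not_lt.1 ht))
  set s := (l + T) / 2
  have hls : l < s := by simp only [s]; linarith [mem_Iio.1 hlT]
  have hsT : s < T := by simp only [s]; linarith [mem_Iio.1 hlT]
  have hderiv : ∀ x ∈ Ioo l T, HasDerivAt G (F x) x := fun x hx =>
    hasDerivAt_integral_of_continuousOn_Ico hcont (hl hx).1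
  set B := |G s| * Real.exp ((T - s) / ε) / ε
  have hbdd : ∀ t ∈ Ioo s T, F t ≤ B := by
    intro t ht
    have hsub : Icc s t ⊆ Ioo l T := Icc_subset_Ioo hls ht.2
    have hgrowth : G t ≤ G s * Real.exp ((t - s) / ε) :=
      le_mul_exp_of_mul_deriv_le hε ht.1.le
        (fun x hx => (hderiv x (hsub hx)).continuousAt.continuousWithinAt)
        (fun x hx => (hderiv x (hsub (Ico_subset_Icc_self hx))).hasDerivWithinAt)
        (fun x hx => (hl (hsub (Ico_subset_Icc_self hx))).2)
    have hFG : ε * F t ≤ G t := (hl (hsub (right_mem_Icc.2 ht.1.le))).2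
    rw [le_div_iff₀ hε, mul_comm]
    calc ε * F t ≤ G s * Real.exp ((t - s) / ε) := hFG.trans hgrowth
      _ ≤ |G s| * Real.exp ((T - s) / ε) := by
        gcongr
        · exact le_abs_self _
        · exact ht.2.le
  obtain ⟨t, hBt, ht⟩ :=
    ((hlim.eventually_gt_atTop B).and (Ioo_mem_nhdsLT hsT)).exists
  exact (hbdd t ht).not_gt hBt

end

/-- Let `T ∈ (0,∞)` and `F : [0,T) → (0,∞)` continuous with
`F(t) → ∞` as `t → T`. Then there is a sequence `t_k → T` with
`(∫₀^{t_k} F) / F(t_k) → 0`. -/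
theorem stmt0 (T : ℝ) (hT : 0 < T) (F : ℝ → ℝ)
    (hcont : ContinuousOn F (Set.Ico 0 T))
    (hpos : ∀ t ∈ Set.Ico (0:ℝ) T, 0 < F t)
    (hlim : Tendsto F (nhdsWithin T (Set.Iio T)) atTop) :
    ∃ t : ℕ → ℝ, (∀ k, t k ∈ Set.Ico (0:ℝ) T) ∧
      Tendsto t atTop (nhds T) ∧
      Tendsto (fun k => (∫ τ in (0:ℝ)..(t k), F τ) / F (t k)) atTop (nhds 0) := by
  have hcluster : MapClusterPt 0 (𝓝[<] T) fun t => (∫ τ in (0:ℝ)..t, F τ) / F t := by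
    rw [(nhds_basis_Ioo_pos (0:ℝ)).mapClusterPt_iff_frequently]
    intro ε hε
    refine ((frequently_integral_lt_mul_of_tendsto_atTop hT hcont hlim hε).and_eventually
      (Ioo_mem_nhdsLT hT)).mono fun t ⟨hlt, ht⟩ => ?_
    have hFt : 0 < F t := hpos t (Ioo_subset_Ico_self ht)
    have hG : 0 ≤ ∫ τ in (0:ℝ)..t, F τ := intervalIntegral.integral_nonneg ht.1.le
      fun τ hτ => (hpos τ ⟨hτ.1, hτ.2.trans_lt ht.2⟩).le
    constructor
    · linarith [div_nonneg hG hFt.le]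
    · rwa [zero_add, div_lt_iff₀ hFt]
  obtain ⟨u, hu_ratio, hu⟩ := hcluster.exists_seq_tendsto
  obtain ⟨N, hN⟩ := eventually_atTop.1 (hu.eventually (Ioo_mem_nhdsLT hT))
  exact ⟨fun k => u (k + N), fun k => Ioo_subset_Ico_self (hN _ (Nat.le_add_left N k)),
    (tendsto_add_atTop_iff_nat N).2 (tendsto_nhds_of_tendsto_nhdsWithin hu),
    (tendsto_add_atTop_iff_nat N).2 hu_ratio⟩
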